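/- Expected under-estimation of RAP (Theorem 4 of the paper): start RAP with table size M from the empty state and process a finite stream of items, where the full-table admission randomness is composed monadically so that the result of the run is a probability mass function over final states. Then for every item x, the expectation of the estimate f̂_x under this distribution is at most f_x, the number of occurrences of x in the stream. -/

import Mathlib

open scoped ENNReal

/-- A state of the RAP algorithm: a finite set `C` of monitored item
identifiers together with a counter value for each item. -/
structure RAPState where
  C : Finset ℕ
  c : ℕ → ℕ

/-- One probabilistic RAP step with table size `M` on arriving item `x`:
in the full-table case, the item with minimal counter value `c_m` is evicted
(and `x` admitted with counter `c_m + 1`) with probability `1/(c_m + 1)`;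
otherwise the state is unchanged. -/
noncomputable def rapStepP (M : ℕ) (s : RAPState) (x : ℕ) : PMF RAPState :=
  if x ∈ s.C then
    PMF.pure { C := s.C, c := Function.update s.c x (s.c x + 1) }
  else if s.C.card < M then
    PMF.pure { C := insert x s.C, c := Function.update s.c x 1 }
  else if h : s.C.Nonempty then
    let m := Classical.choose (s.C.exists_min_image s.c h)
    (PMF.bernoulli (1 / ((s.c m : NNReal) + 1)) (by
        rw [div_le_one (by positivity)]
        simp [le_add_self])).bind fun b =>
      PMF.pure (if b then
        { C := insert x (s.C.erase m), c := Function.update s.c x (s.c m + 1) }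
      else s)
  else PMF.pure s

/-- RAP's estimate of the frequency of item `x` in state `s`. -/
def estimate (s : RAPState) (x : ℕ) : ℕ :=
  if x ∈ s.C then s.c x else 0

/-- The empty initial RAP state. -/
def rapInit : RAPState := { C := ∅, c := fun _ => 0 }
/-- Running probabilistic RAP with table size `M` on a stream of items,
starting from the empty state and composing the per-step randomness
monadically, yielding a distribution over final states. -/
noncomputable def rapRunP (M : ℕ) (stream : List ℕ) : PMF RAPState :=
  stream.foldl (fun p x => p.bind fun s => rapStepP M s x) (PMF.pure rapInit)

/-! Each step raises the expected estimate of `x` by at most `[y = x]` on arriving item `y`. A hit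
or an admission into free room raises `f̂_x` by exactly that. On a full table with `y = x`,
admission happens with probability `1/(c_m + 1)` and sets `f̂_x = c_m + 1`, so the expected gain is
exactly `1`; with `y ≠ x` an eviction can only lower `f̂_x`. Summing over the stream gives the
bound. -/

namespace PMF

variable {α β : Type*}

theorem tsum_pure_mul (a : α) (g : α → ℝ≥0∞) : ∑' t, pure a t * g t = g a := by
  simp [pure_apply]

theorem tsum_bind_mul (p : PMF α) (f : α → PMF β) (g : β → ℝ≥0∞) :
    ∑' b, p.bind f b * g b = ∑' a, p a * ∑' b, f a b * g b := by
  simp only [bind_apply, ← ENNReal.tsum_mul_right, ← ENNReal.tsum_mul_left, mul_assoc]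
  exact ENNReal.tsum_comm

theorem tsum_bernoulli_bind_mul (q : NNReal) (hq : q ≤ 1) (f : Bool → PMF α) (g : α → ℝ≥0∞) :
    ∑' a, (bernoulli q hq).bind f a * g a =
      (1 - q : NNReal) * ∑' a, f false a * g a + q * ∑' a, f true a * g a := by
  rw [tsum_bind_mul, tsum_bool, bernoulli_apply, bernoulli_apply]
  rfl

theorem tsum_bind_mul_le (p : PMF α) (f : α → PMF β) {g : α → ℝ≥0∞} {h : β → ℝ≥0∞} {d : ℝ≥0∞}
    (hf : ∀ a, ∑' b, f a b * h b ≤ g a + d) :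
    ∑' b, p.bind f b * h b ≤ ∑' a, p a * g a + d :=
  calc ∑' b, p.bind f b * h b
      ≤ ∑' a, p a * (g a + d) := by
        rw [tsum_bind_mul]
        gcongr with a
        exact hf a
    _ = ∑' a, p a * g a + d := by
        simp only [mul_add, ENNReal.tsum_add, ENNReal.tsum_mul_right, tsum_coe, one_mul]

theorem tsum_foldl_bind_mul_le (step : α → β → PMF α) {g : α → ℝ≥0∞} {d : β → ℝ≥0∞}
    (hstep : ∀ a y, ∑' b, step a y b * g b ≤ g a + d y) (l : List β) (p : PMF α) :
    ∑' a, l.foldl (fun p y => p.bind fun a => step a y) p a * g a ≤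
      ∑' a, p a * g a + (l.map d).sum := by
  induction l generalizing p with
  | nil => simp
  | cons y l ih =>
    calc _ ≤ ∑' a, (p.bind fun a => step a y) a * g a + (l.map d).sum := ih _
      _ ≤ ∑' a, p a * g a + d y + (l.map d).sum := by
          gcongr
          exact tsum_bind_mul_le p _ (hstep · y)
      _ = _ := by rw [List.map_cons, List.sum_cons, add_assoc]

end PMF

theorem List.sum_map_ite_eq_count {α R : Type*} [DecidableEq α] [AddCommMonoidWithOne R]
    (l : List α) (x : α) : (l.map fun y => if y = x then (1 : R) else 0).sum = l.count x := by
  induction l with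
  | nil => simp
  | cons y l ih => simp [List.count_cons, ih, add_comm]

section Estimate

variable {C : Finset ℕ} {c : ℕ → ℕ} {x y : ℕ}

theorem estimate_hit (hy : y ∈ C) :
    (estimate ⟨C, Function.update c y (c y + 1)⟩ x : ℝ≥0∞) =
      estimate ⟨C, c⟩ x + if y = x then 1 else 0 := by
  by_cases hxy : y = x
  · subst hxy; simp [estimate, hy]
  · simp [estimate, hxy, Function.update_of_ne (Ne.symm hxy)]

theorem estimate_admit (hy : y ∉ C) :
    (estimate ⟨insert y C, Function.update c y 1⟩ x : ℝ≥0∞) =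
      estimate ⟨C, c⟩ x + if y = x then 1 else 0 := by
  by_cases hxy : y = x
  · subst hxy; simp [estimate, hy]
  · simp [estimate, hxy, Ne.symm hxy]

theorem estimate_replace_self (m : ℕ) :
    estimate ⟨insert y (C.erase m), Function.update c y (c m + 1)⟩ y = c m + 1 := by
  simp [estimate]

theorem estimate_replace_of_ne (m : ℕ) (hxy : x ≠ y) :
    estimate ⟨insert y (C.erase m), Function.update c y (c m + 1)⟩ x ≤ estimate ⟨C, c⟩ x := by
  by_cases hxm : x = m
  · subst hxm; simp [estimate, hxy]
  · simp [estimate, hxy, hxm]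

end Estimate

theorem ENNReal.one_sub_mul_add_mul_le {q : NNReal} (hq : q ≤ 1) {a b : ℝ≥0∞} (hba : b ≤ a) :
    (1 - q : NNReal) * a + q * b ≤ a :=
  calc (1 - q : NNReal) * a + q * b ≤ (1 - q : NNReal) * a + q * a := by gcongr
    _ = a := by rw [← add_mul, ← ENNReal.coe_add, tsub_add_cancel_of_le hq, ENNReal.coe_one, one_mul]

theorem tsum_evict_mul_estimate_le {C : Finset ℕ} {c : ℕ → ℕ} {y : ℕ} (hy : y ∉ C) (m x : ℕ)
    (hq : 1 / ((c m : NNReal) + 1) ≤ 1) :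
    ∑' t, ((PMF.bernoulli (1 / ((c m : NNReal) + 1)) hq).bind fun b =>
        PMF.pure (if b then ⟨insert y (C.erase m), Function.update c y (c m + 1)⟩ else ⟨C, c⟩)) t *
        (estimate t x : ℝ≥0∞) ≤
      estimate ⟨C, c⟩ x + if y = x then 1 else 0 := by
  simp only [PMF.tsum_bernoulli_bind_mul, Bool.false_eq_true, if_false, if_true,
    PMF.tsum_pure_mul]
  by_cases hxy : x = y
  · subst hxy
    have h_absent : estimate ⟨C, c⟩ x = 0 := by simp [estimate, hy]
    have hq_inv : ((1 / ((c m : NNReal) + 1) : NNReal) : ℝ≥0∞) * ((c m + 1 : ℕ) : ℝ≥0∞) = 1 := by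
      exact_mod_cast one_div_mul_cancel (by positivity)
    rw [estimate_replace_self, h_absent, hq_inv, if_pos rfl]
    simp
  · rw [if_neg (Ne.symm hxy), add_zero]
    exact ENNReal.one_sub_mul_add_mul_le hq (by exact_mod_cast estimate_replace_of_ne m hxy)

theorem rapStepP_expectation_le (M : ℕ) (s : RAPState) (y x : ℕ) :
    ∑' t, rapStepP M s y t * (estimate t x : ℝ≥0∞) ≤ estimate s x + if y = x then 1 else 0 := by
  obtain ⟨C, c⟩ := s
  dsimp only [rapStepP]
  by_cases hy : y ∈ C
  · rw [if_pos hy, PMF.tsum_pure_mul, estimate_hit hy]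
  rw [if_neg hy]
  by_cases hroom : C.card < M
  · rw [if_pos hroom, PMF.tsum_pure_mul, estimate_admit hy]
  rw [if_neg hroom]
  by_cases hne : C.Nonempty
  · rw [dif_pos hne]
    exact tsum_evict_mul_estimate_le hy _ x _
  · rw [dif_neg hne, PMF.tsum_pure_mul]
    exact le_self_add

/-- Expected under-estimation of RAP: for every item `x`, the expected
estimate of `x` after processing a finite stream from the empty state is at
most the number of occurrences of `x` in the stream. -/
theorem rapRunP_expectation_le_count (M : ℕ) (stream : List ℕ) (x : ℕ) :
    ∑' t : RAPState, rapRunP M stream t * (estimate t x : ℝ≥0∞) ≤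
      (stream.count x : ℝ≥0∞) := by
  calc _ ≤ ∑' t, PMF.pure rapInit t * (estimate t x : ℝ≥0∞) +
        (stream.map fun y => if y = x then (1 : ℝ≥0∞) else 0).sum :=
        PMF.tsum_foldl_bind_mul_le _ (rapStepP_expectation_le M · · x) stream _
    _ = stream.count x := by
        rw [PMF.tsum_pure_mul, List.sum_map_ite_eq_count]
        simp [estimate, rapInit]
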